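/- Define for N ≥ 1 and m = ⌈log₂ N⌉ the iterated receptive field R_r ⊆ ZMod N by R_0 = {0} and R_{r+1} = { x + o : x ∈ R_r, o ∈ {0} ∪ {2^k mod N : k < m} }. Then R_m = ZMod N, i.e., after m steps the receptive field is full. -/

import Mathlib

def chordOffsets (N m : ℕ) : Set (ZMod N) :=
  {0} ∪ {o | ∃ k < m, o = (2 : ZMod N) ^ k}

def receptiveField (N m : ℕ) : ℕ → Set (ZMod N)
  | 0 => {0}
  | r + 1 => {y | ∃ x ∈ receptiveField N m r, ∃ o ∈ chordOffsets N m, y = x + o}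

/-!
Every `n < 2 ^ r` is a sum of distinct powers `2 ^ k` with `k < r` (its binary expansion), so it
is reached in `r` blocks by using the offset `2 ^ k` at block `k + 1` when bit `k` of `n` is set
and the offset `0` otherwise. Every residue mod `N` is the cast of its representative
`n < N ≤ 2 ^ ⌈log₂ N⌉`.
-/

section

variable {N m : ℕ}

theorem zero_mem_chordOffsets : (0 : ZMod N) ∈ chordOffsets N m :=
  Or.inl rfl

theorem two_pow_mem_chordOffsets {k : ℕ} (hk : k < m) : (2 : ZMod N) ^ k ∈ chordOffsets N m :=
  Or.inr ⟨k, hk, rfl⟩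

theorem zero_mem_receptiveField_zero : (0 : ZMod N) ∈ receptiveField N m 0 :=
  rfl

theorem add_mem_receptiveField_succ {r : ℕ} {x o : ZMod N} (hx : x ∈ receptiveField N m r)
    (ho : o ∈ chordOffsets N m) : x + o ∈ receptiveField N m (r + 1) :=
  ⟨x, hx, o, ho, rfl⟩

theorem natCast_mem_receptiveField {r n : ℕ} (hr : r ≤ m) (hn : n < 2 ^ r) :
    (n : ZMod N) ∈ receptiveField N m r := by
  induction r generalizing n with
  | zero =>
    obtain rfl : n = 0 := by simpa using hn
    simpa using zero_mem_receptiveField_zero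
  | succ r ih =>
    have hr' : r ≤ m := by omega
    rcases lt_or_ge n (2 ^ r) with hlow | hhigh
    · simpa using add_mem_receptiveField_succ (ih hr' hlow) zero_mem_chordOffsets
    · obtain ⟨n', rfl⟩ : ∃ n', n = n' + 2 ^ r := ⟨n - 2 ^ r, by omega⟩
      have hn' : n' < 2 ^ r := by rw [pow_succ] at hn; omega
      simpa using add_mem_receptiveField_succ (ih hr' hn') (two_pow_mem_chordOffsets (N := N) hr)

end

theorem receptiveField_full (N : ℕ) (hN : 1 ≤ N) :
    receptiveField N (Nat.clog 2 N) (Nat.clog 2 N) = Set.univ := by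
  have : NeZero N := ⟨by omega⟩
  refine Set.eq_univ_of_forall fun z => ?_
  have hz : z.val < 2 ^ Nat.clog 2 N :=
    (ZMod.val_lt z).trans_le (Nat.le_pow_clog one_lt_two N)
  simpa using natCast_mem_receptiveField (N := N) le_rfl hz
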